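/- arXiv:2509.16694 — 2 statements merged into one kernel-verified Lean document; each statement's English description precedes it below -/
import Mathlib

section
/- (Covariance formula.) Let 0 ≤ s < t ≤ N and x, y ∈ ℤ². Then 𝔼[W_{s,t}(x) W_{s,t}(y)] = E_{x−y}[exp(β_N² Σ_{n=s+1}^t h(S_{2n}))]. Furthermore, with σ̄_N² = e^{β_N²} β_N², one has E_x[∏_{n=s+1}^t (1 + β_N² h(S_{2n}))] ≤ 𝔼[W_{s,t}(x) W_{s,t}(0)] ≤ E_x[∏_{n=s+1}^t (1 + σ̄_N² h(S_{2n}))]. -/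
open MeasureTheory ProbabilityTheory Filter
open scoped NNReal BigOperators Topology

noncomputable section

/-- Euclidean norm on `ℤ × ℤ`. -/
def nrm (x : ℤ × ℤ) : ℝ := Real.sqrt ((x.1 : ℝ) ^ 2 + (x.2 : ℝ) ^ 2)

/-- The four nearest-neighbour steps of the simple random walk on `ℤ²`. -/
def steps : Finset (ℤ × ℤ) := {(1, 0), (-1, 0), (0, 1), (0, -1)}

/-- The walk path started at `x` built from the first `t` increments `ε`. -/
def walkPath (t : ℕ) (x : ℤ × ℤ) (ε : Fin t → ℤ × ℤ) (n : ℕ) : ℤ × ℤ :=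
  x + ∑ i ∈ Finset.univ.filter (fun i : Fin t => (i : ℕ) < n), ε i

/-- Expectation over the simple random walk on `ℤ²` started at `x`, of a functional
depending on the path up to time `t` (each of the `4^t` step sequences has weight `4⁻ᵗ`). -/
def Ewalk (t : ℕ) (x : ℤ × ℤ) (f : (ℕ → ℤ × ℤ) → ℝ) : ℝ :=
  (4 : ℝ)⁻¹ ^ t * ∑ ε ∈ Fintype.piFinset (fun _ : Fin t => steps), f (walkPath t x ε)

/-- `pwalk n x = P(S_n = x)` for the simple random walk started at `0`. -/
def pwalk (n : ℕ) (x : ℤ × ℤ) : ℝ := Ewalk n 0 (fun S => if S n = x then 1 else 0)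

/-- `α = (a+1)/(a+2) − 1`. -/
def alphaOf (a : ℝ) : ℝ := (a + 1) / (a + 2) - 1

/-- The normalized Bessel function `J̃_α(z) = Γ(α+1) ∑ (−1)ⁿ/(Γ(n+α+1) n!) (z/2)^{2n}`,
with `α = alphaOf a`. -/
def Jt (a : ℝ) (z : ℝ) : ℝ :=
  Real.Gamma (alphaOf a + 1) *
    ∑' n : ℕ, ((-1 : ℝ) ^ n / (Real.Gamma ((n : ℝ) + alphaOf a + 1) * (n.factorial : ℝ)))
      * (z / 2) ^ (2 * n)

/-- `z_a`, the first positive zero of `J̃_α`. -/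
def za (a : ℝ) : ℝ := sInf {z : ℝ | 0 < z ∧ Jt a z = 0}

/-- The intermediate-disorder inverse temperature `β_N = 𝔠_a β̂ / (log N)^((a+2)/2)`,
with `𝔠_a = 2^((a−1)/2) (a+2)`. -/
def betaN (a bh : ℝ) (N : ℕ) : ℝ :=
  ((2 : ℝ) ^ ((a - 1) / 2) * (a + 2)) * bh / (Real.log N) ^ ((a + 2) / 2)

/-- Partition function `W_{s,t}(x)` for a fixed realization `ωf` of the field. -/
def Wst (β : ℝ) (ωf : ℕ → ℤ × ℤ → ℝ) (s t : ℕ) (x : ℤ × ℤ) : ℝ :=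
  Ewalk t x (fun S => Real.exp (∑ n ∈ Finset.Icc (s + 1) t, (β * ωf n (S n) - β ^ 2 / 2)))

/-!
For fixed walk paths `S, S'`, the exponent of `W(x) W(y)` is a centred Gaussian linear combination
of the field, with variance `2 |I| β² + 2 β² ∑_{n ∈ I} h(Sₙ - S'ₙ)` for `I = {s+1, …, t}`, since
the field is uncorrelated in time and `h(0) = 1`; the Wick normalisation `-β²/2`
cancels the diagonal part, leaving `exp (β² ∑ₙ h(Sₙ - S'ₙ))`. The difference of two independent
walks from `x` and `y` is, at time `n`, a single walk from `x - y` at time `2n`: interleave the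
steps of the first walk with the negated steps of the second. The bounds come from
`1 + u ≤ eᵘ ≤ 1 + e^{β²} u` for `0 ≤ u = β² h ≤ β²`, where `h ≤ h(0) = 1` since `h` is a covariance.
-/

open Finset

section GaussianFamily

variable {Ω ι κ : Type*} [MeasurableSpace Ω] {μ : Measure Ω}

def IsCenteredGaussianFamily (μ : Measure Ω) (X : ι → Ω → ℝ) : Prop :=
  ∀ c : ι →₀ ℝ, ∃ v : ℝ≥0, μ.map (fun η => ∑ i ∈ c.support, c i * X i η) = gaussianReal 0 v

lemma hasLaw_of_map_eq {E : Type*} [MeasurableSpace E] {ν : Measure E} [NeZero ν] {L : Ω → E}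
    (hL : μ.map L = ν) : HasLaw L ν μ :=
  ⟨aemeasurable_of_map_neZero (hL ▸ inferInstance), hL⟩

lemma ProbabilityTheory.HasLaw.integral_sq_of_gaussianReal {L : Ω → ℝ} {v : ℝ≥0}
    (hL : HasLaw L (gaussianReal 0 v) μ) : ∫ η, L η ^ 2 ∂μ = v := by
  have hvar := variance_fun_id_gaussianReal (μ := 0) (v := v)
  rw [variance_of_integral_eq_zero aemeasurable_id' (by simp)] at hvar
  rw [← hvar]
  exact hL.integral_comp (f := fun x => x ^ 2) (by fun_prop)

lemma ProbabilityTheory.HasLaw.integral_exp_of_gaussianReal {L : Ω → ℝ} {v : ℝ≥0}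
    (hL : HasLaw L (gaussianReal 0 v) μ) :
    Integrable (fun η => Real.exp (L η)) μ ∧
      ∫ η, Real.exp (L η) ∂μ = Real.exp (2⁻¹ * ∫ η, L η ^ 2 ∂μ) := by
  have : IsProbabilityMeasure μ := hL.isProbabilityMeasure
  have hmgf : mgf L μ 1 = Real.exp (2⁻¹ * v) := by
    rw [mgf_gaussianReal hL.map_eq 1]
    ring_nf
  have hpos : 0 < mgf L μ 1 := hmgf ▸ Real.exp_pos _
  refine ⟨by simpa only [one_mul] using mgf_pos_iff.1 hpos, ?_⟩
  simpa [mgf, hL.integral_sq_of_gaussianReal] using hmgf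

variable {X : ι → Ω → ℝ}

lemma IsCenteredGaussianFamily.hasLaw_sum (hX : IsCenteredGaussianFamily μ X)
    (A : Finset κ) (b : κ → ℝ) (P : κ → ι) :
    ∃ v : ℝ≥0, HasLaw (fun η => ∑ k ∈ A, b k * X (P k) η) (gaussianReal 0 v) μ := by
  obtain ⟨v, hv⟩ := hX (∑ k ∈ A, Finsupp.single (P k) (b k))
  refine ⟨v, hasLaw_of_map_eq (Eq.trans ?_ hv)⟩
  congr 1
  funext η
  change _ = Finsupp.sum _ fun i r => r * X i η
  rw [← Finsupp.sum_finsetSum_index (by simp) (by simp [add_mul])]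
  simp

lemma IsCenteredGaussianFamily.memLp_two (hX : IsCenteredGaussianFamily μ X) (i : ι) :
    MemLp (X i) 2 μ := by
  obtain ⟨v, hv⟩ := hX.hasLaw_sum {()} (fun _ => 1) (fun _ => i)
  simp only [sum_singleton, one_mul] at hv
  have := (memLp_map_measure_iff (p := 2) (g := id) (by fun_prop) hv.aemeasurable).1
  rw [hv.map_eq] at this
  exact this (memLp_id_gaussianReal' 2 (by simp))

lemma IsCenteredGaussianFamily.integrable_mul (hX : IsCenteredGaussianFamily μ X) (i j : ι) :
    Integrable (fun η => X i η * X j η) μ :=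
  (hX.memLp_two i).integrable_mul (hX.memLp_two j)

lemma IsCenteredGaussianFamily.integral_sq_sum (hX : IsCenteredGaussianFamily μ X)
    (A : Finset κ) (b : κ → ℝ) (P : κ → ι) :
    ∫ η, (∑ k ∈ A, b k * X (P k) η) ^ 2 ∂μ =
      ∑ k ∈ A, ∑ l ∈ A, b k * b l * ∫ η, X (P k) η * X (P l) η ∂μ := by
  have hexpand : ∀ η, (∑ k ∈ A, b k * X (P k) η) ^ 2 =
      ∑ k ∈ A, ∑ l ∈ A, b k * b l * (X (P k) η * X (P l) η) := fun η => by
    rw [sq, sum_mul_sum]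
    exact sum_congr rfl fun k _ => sum_congr rfl fun l _ => by ring
  simp_rw [hexpand]
  rw [integral_finsetSum _ fun k _ => integrable_finsetSum _ fun l _ =>
    (hX.integrable_mul _ _).const_mul _]
  refine sum_congr rfl fun k _ => ?_
  rw [integral_finsetSum _ fun l _ => (hX.integrable_mul _ _).const_mul _]
  simp_rw [integral_const_mul]

lemma IsCenteredGaussianFamily.integral_exp_sum (hX : IsCenteredGaussianFamily μ X)
    (A : Finset κ) (b : κ → ℝ) (P : κ → ι) :
    Integrable (fun η => Real.exp (∑ k ∈ A, b k * X (P k) η)) μ ∧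
      ∫ η, Real.exp (∑ k ∈ A, b k * X (P k) η) ∂μ =
        Real.exp (2⁻¹ * ∑ k ∈ A, ∑ l ∈ A, b k * b l * ∫ η, X (P k) η * X (P l) η ∂μ) := by
  obtain ⟨v, hv⟩ := hX.hasLaw_sum A b P
  rw [← hX.integral_sq_sum]
  exact hv.integral_exp_of_gaussianReal

lemma IsCenteredGaussianFamily.two_mul_integral_mul_le (hX : IsCenteredGaussianFamily μ X)
    (i j : ι) :
    2 * ∫ η, X i η * X j η ∂μ ≤ (∫ η, X i η * X i η ∂μ) + ∫ η, X j η * X j η ∂μ := by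
  rw [← integral_const_mul, ← integral_add (hX.integrable_mul i i) (hX.integrable_mul j j)]
  refine integral_mono ((hX.integrable_mul i j).const_mul 2)
    ((hX.integrable_mul i i).add (hX.integrable_mul j j)) fun η => ?_
  nlinarith [sq_nonneg (X i η - X j η)]

end GaussianFamily

section SpaceTimeField

variable {Ω : Type*} [MeasurableSpace Ω] {μ : Measure Ω} {ω : ℕ → ℤ × ℤ → Ω → ℝ}
  {h : ℤ × ℤ → ℝ}

abbrev HasCovariance (μ : Measure Ω) (ω : ℕ → ℤ × ℤ → Ω → ℝ) (h : ℤ × ℤ → ℝ) : Prop :=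
  ∀ n m : ℕ, ∀ y z : ℤ × ℤ, (∫ η, ω n y η * ω m z η ∂μ) = if n = m then h (y - z) else 0

lemma covariance_symm (hcov : HasCovariance μ ω h) (y z : ℤ × ℤ) :
    h (y - z) = h (z - y) := by
  have hy := hcov 0 0 y z
  have hz := hcov 0 0 z y
  simp only [if_true] at hy hz
  rw [← hy, ← hz]
  simp_rw [mul_comm]

lemma covariance_le_one (hω : IsCenteredGaussianFamily μ fun p : ℕ × (ℤ × ℤ) => ω p.1 p.2)
    (hcov : HasCovariance μ ω h)
    (hone : h 0 = 1) (u : ℤ × ℤ) : h u ≤ 1 := by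
  have := hω.two_mul_integral_mul_le (0, u) (0, 0)
  simp only [hcov, if_true, sub_self, sub_zero, hone] at this
  linarith

lemma integral_exp_sum_mul_exp_sum
    (hω : IsCenteredGaussianFamily μ fun p : ℕ × (ℤ × ℤ) => ω p.1 p.2)
    (hcov : HasCovariance μ ω h)
    (hone : h 0 = 1) (β : ℝ) (I : Finset ℕ) (S S' : ℕ → ℤ × ℤ) :
    Integrable (fun η => Real.exp (∑ n ∈ I, (β * ω n (S n) η - β ^ 2 / 2)) *
      Real.exp (∑ n ∈ I, (β * ω n (S' n) η - β ^ 2 / 2))) μ ∧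
    ∫ η, Real.exp (∑ n ∈ I, (β * ω n (S n) η - β ^ 2 / 2)) *
      Real.exp (∑ n ∈ I, (β * ω n (S' n) η - β ^ 2 / 2)) ∂μ =
        Real.exp (β ^ 2 * ∑ n ∈ I, h (S n - S' n)) := by
  -- Indexing by `ℕ ⊕ ℕ` keeps both paths' terms even where `S n = S' n`.
  let P : ℕ ⊕ ℕ → ℕ × (ℤ × ℤ) := Sum.elim (fun n => (n, S n)) (fun n => (n, S' n))
  obtain ⟨hint, hval⟩ := hω.integral_exp_sum (I.disjSum I) (fun _ => β) P
  have hsplit : ∀ η, Real.exp (∑ n ∈ I, (β * ω n (S n) η - β ^ 2 / 2)) *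
      Real.exp (∑ n ∈ I, (β * ω n (S' n) η - β ^ 2 / 2)) =
        Real.exp (-(#I * β ^ 2)) * Real.exp (∑ k ∈ I.disjSum I, β * ω (P k).1 (P k).2 η) := by
    intro η
    rw [← Real.exp_add, ← Real.exp_add, sum_disjSum]
    simp only [sum_sub_distrib, sum_const, nsmul_eq_mul, P, Sum.elim_inl, Sum.elim_inr]
    ring_nf
  have hdiag : ∀ T T' : ℕ → ℤ × ℤ, ∑ n ∈ I, ∑ m ∈ I,
      β * β * ∫ η, ω n (T n) η * ω m (T' m) η ∂μ = β ^ 2 * ∑ n ∈ I, h (T n - T' n) := by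
    intro T T'
    rw [mul_sum]
    refine sum_congr rfl fun n hn => ?_
    simp only [hcov, mul_ite, mul_zero, sum_ite_eq, if_pos hn]
    ring
  have hvar : ∑ k ∈ I.disjSum I, ∑ l ∈ I.disjSum I,
      β * β * ∫ η, ω (P k).1 (P k).2 η * ω (P l).1 (P l).2 η ∂μ =
        2 * (#I * β ^ 2) + 2 * (β ^ 2 * ∑ n ∈ I, h (S n - S' n)) := by
    simp only [sum_disjSum, sum_add_distrib, P, Sum.elim_inl, Sum.elim_inr]
    rw [hdiag, hdiag, hdiag, hdiag]
    simp only [sub_self, hone, covariance_symm hcov (S' _), sum_const, nsmul_eq_mul]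
    ring
  refine ⟨(hint.const_mul _).congr (ae_of_all _ fun η => (hsplit η).symm), ?_⟩
  rw [integral_congr_ae (ae_of_all _ hsplit), integral_const_mul, hval, hvar, ← Real.exp_add]
  ring_nf

end SpaceTimeField

section RandomWalk

lemma sum_fin_two_mul {M : Type*} [AddCommMonoid M] (t : ℕ) (f : Fin (2 * t) → M) :
    ∑ i, f i = ∑ j : Fin t, (f ⟨2 * j, by omega⟩ + f ⟨2 * j + 1, by omega⟩) := by
  rw [← (finProdFinEquiv.trans (finCongr (Nat.mul_comm t 2))).sum_comp, Fintype.sum_prod_type]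
  refine sum_congr rfl fun j _ => ?_
  rw [Fin.sum_univ_two]
  congr 2 <;> ext <;> simp [finProdFinEquiv, add_comm]

lemma walkPath_two_mul (t : ℕ) (z : ℤ × ℤ) (δ : Fin (2 * t) → ℤ × ℤ) (n : ℕ) :
    walkPath (2 * t) z δ (2 * n) =
      z + ∑ j ∈ univ.filter (fun j : Fin t => (j : ℕ) < n),
        (δ ⟨2 * j, by omega⟩ + δ ⟨2 * j + 1, by omega⟩) := by
  simp only [walkPath, sum_filter, sum_fin_two_mul]
  congr 1
  refine sum_congr rfl fun j _ => ?_
  by_cases hj : (j : ℕ) < n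
  · simp [hj, show 2 * (j : ℕ) < 2 * n by omega, show 2 * (j : ℕ) + 1 < 2 * n by omega]
  · simp [hj, show ¬ 2 * (j : ℕ) < 2 * n by omega, show ¬ 2 * (j : ℕ) + 1 < 2 * n by omega]

def interleave {t : ℕ} (ε ε' : Fin t → ℤ × ℤ) (i : Fin (2 * t)) : ℤ × ℤ :=
  if (i : ℕ) % 2 = 0 then ε ⟨i / 2, by omega⟩ else -ε' ⟨i / 2, by omega⟩

lemma interleave_two_mul {t : ℕ} (ε ε' : Fin t → ℤ × ℤ) (j : Fin t) :
    interleave ε ε' ⟨2 * j, by omega⟩ = ε j := by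
  simp [interleave]

lemma interleave_two_mul_add_one {t : ℕ} (ε ε' : Fin t → ℤ × ℤ) (j : Fin t) :
    interleave ε ε' ⟨2 * j + 1, by omega⟩ = -ε' j := by
  simp only [interleave, Nat.mul_add_mod, Nat.one_mod, one_ne_zero, if_false]
  exact congrArg _ (congrArg ε' (Fin.ext (by simp only; omega)))

lemma walkPath_interleave (t : ℕ) (x y : ℤ × ℤ) (ε ε' : Fin t → ℤ × ℤ) (n : ℕ) :
    walkPath (2 * t) (x - y) (interleave ε ε') (2 * n) = walkPath t x ε n - walkPath t y ε' n := by
  rw [walkPath_two_mul]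
  simp only [interleave_two_mul, interleave_two_mul_add_one, ← sub_eq_add_neg, sum_sub_distrib,
    walkPath]
  abel

lemma neg_mem_steps {z : ℤ × ℤ} (hz : z ∈ steps) : -z ∈ steps := by
  revert z
  decide

lemma Ewalk_Ewalk_sub (t : ℕ) (x y : ℤ × ℤ) (g : (ℕ → ℤ × ℤ) → ℝ) :
    Ewalk t x (fun S => Ewalk t y (fun S' => g (fun n => S n - S' n))) =
      Ewalk (2 * t) (x - y) (fun S => g (fun n => S (2 * n))) := by
  simp only [Ewalk, mul_sum]
  rw [← sum_product']
  refine sum_nbij' (fun p => interleave p.1 p.2)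
    (fun δ => (fun j => δ ⟨2 * j, by omega⟩, fun j => -δ ⟨2 * j + 1, by omega⟩))
    ?_ ?_ ?_ ?_ ?_
  · intro p hp
    simp only [mem_product, Fintype.mem_piFinset] at hp ⊢
    intro i
    unfold interleave
    split_ifs
    · exact hp.1 _
    · exact neg_mem_steps (hp.2 _)
  · intro δ hδ
    simp only [mem_product, Fintype.mem_piFinset] at hδ ⊢
    exact ⟨fun j => hδ _, fun j => neg_mem_steps (hδ _)⟩
  · intro p _
    simp only [interleave_two_mul, interleave_two_mul_add_one, neg_neg]
  · intro δ _
    funext i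
    unfold interleave
    split_ifs with hi
    · exact congrArg δ (Fin.ext (by simp only; omega))
    · rw [neg_neg]
      exact congrArg δ (Fin.ext (by simp only; omega))
  · intro p _
    simp only [walkPath_interleave]
    ring

end RandomWalk

section WalkExpectation

lemma Ewalk_mul_Ewalk (t t' : ℕ) (x y : ℤ × ℤ) (f g : (ℕ → ℤ × ℤ) → ℝ) :
    Ewalk t x f * Ewalk t' y g = Ewalk t x (fun S => Ewalk t' y (fun S' => f S * g S')) := by
  simp only [Ewalk]
  rw [mul_mul_mul_comm, sum_mul_sum, mul_assoc, mul_sum]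

lemma Ewalk_mono {t : ℕ} {x : ℤ × ℤ} {f g : (ℕ → ℤ × ℤ) → ℝ} (hfg : ∀ S, f S ≤ g S) :
    Ewalk t x f ≤ Ewalk t x g :=
  mul_le_mul_of_nonneg_left (sum_le_sum fun ε _ => hfg _) (by positivity)

variable {Ω : Type*} [MeasurableSpace Ω] {μ : Measure Ω}

lemma integral_Ewalk {F : (ℕ → ℤ × ℤ) → Ω → ℝ} (hF : ∀ S, Integrable (F S) μ)
    (t : ℕ) (x : ℤ × ℤ) :
    Integrable (fun η => Ewalk t x (fun S => F S η)) μ ∧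
      ∫ η, Ewalk t x (fun S => F S η) ∂μ = Ewalk t x (fun S => ∫ η, F S η ∂μ) :=
  ⟨(integrable_finsetSum _ fun ε _ => hF _).const_mul _, by
    simp only [Ewalk]
    rw [integral_const_mul, integral_finsetSum _ fun ε _ => hF _]⟩

end WalkExpectation

lemma integral_Wst_mul_Wst {Ω : Type*} [MeasurableSpace Ω] {μ : Measure Ω}
    {ω : ℕ → ℤ × ℤ → Ω → ℝ} {h : ℤ × ℤ → ℝ}
    (hω : IsCenteredGaussianFamily μ fun p : ℕ × (ℤ × ℤ) => ω p.1 p.2)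
    (hcov : HasCovariance μ ω h)
    (hone : h 0 = 1) (β : ℝ) (s t : ℕ) (x y : ℤ × ℤ) :
    ∫ η, Wst β (fun n z => ω n z η) s t x * Wst β (fun n z => ω n z η) s t y ∂μ =
      Ewalk (2 * t) (x - y) (fun S =>
        Real.exp (β ^ 2 * ∑ n ∈ Finset.Icc (s + 1) t, h (S (2 * n)))) := by
  have hpair := integral_exp_sum_mul_exp_sum hω hcov hone β (Icc (s + 1) t)
  have hinner := fun S => integral_Ewalk (hpair S · |>.1) t y
  simp only [Wst, Ewalk_mul_Ewalk]
  rw [(integral_Ewalk (hinner · |>.1) t x).2]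
  simp only [(hinner _).2, (hpair _ _).2]
  exact Ewalk_Ewalk_sub t x y fun S => Real.exp (β ^ 2 * ∑ n ∈ Icc (s + 1) t, h (S n))

lemma exp_le_one_add_exp_mul {u c : ℝ} (hu : 0 ≤ u) (huc : u ≤ c) :
    Real.exp u ≤ 1 + Real.exp c * u := by
  have h1 : (1 - u) * Real.exp u ≤ 1 := by
    calc (1 - u) * Real.exp u ≤ Real.exp (-u) * Real.exp u :=
          mul_le_mul_of_nonneg_right (Real.one_sub_le_exp_neg u) (Real.exp_pos u).le
      _ = 1 := by rw [← Real.exp_add, neg_add_cancel, Real.exp_zero]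
  nlinarith [Real.exp_le_exp.2 huc]

lemma prod_one_add_mul_le_exp_mul_sum {ι : Type*} {I : Finset ι} {b : ℝ} {u : ι → ℝ}
    (hb : 0 ≤ b) (hu : ∀ i ∈ I, 0 ≤ u i) :
    ∏ i ∈ I, (1 + b * u i) ≤ Real.exp (b * ∑ i ∈ I, u i) := by
  rw [mul_sum, Real.exp_sum]
  refine prod_le_prod (fun i hi => by nlinarith [hu i hi]) fun i _ => ?_
  linarith [Real.add_one_le_exp (b * u i)]

lemma exp_mul_sum_le_prod_one_add {ι : Type*} {I : Finset ι} {b : ℝ} {u : ι → ℝ}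
    (hb : 0 ≤ b) (hu : ∀ i ∈ I, 0 ≤ u i) (hu_le : ∀ i ∈ I, u i ≤ 1) :
    Real.exp (b * ∑ i ∈ I, u i) ≤ ∏ i ∈ I, (1 + Real.exp b * b * u i) := by
  rw [mul_sum, Real.exp_sum]
  refine prod_le_prod (fun i _ => (Real.exp_pos _).le) fun i hi => ?_
  rw [mul_assoc]
  exact exp_le_one_add_exp_mul (mul_nonneg hb (hu i hi))
    (mul_le_of_le_one_right hb (hu_le i hi))

theorem covariance_formula_general (a : ℝ)
    (h : ℤ × ℤ → ℝ) (hpos : ∀ x, 0 ≤ h x)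
    (hone : h 0 = 1)
    (bh : ℝ)
    {Ω : Type} [MeasurableSpace Ω] (μ : Measure Ω)
    (ω : ℕ → ℤ × ℤ → Ω → ℝ)
    (hgauss : ∀ c : (ℕ × (ℤ × ℤ)) →₀ ℝ, ∃ v : ℝ≥0,
      Measure.map (fun η => ∑ p ∈ c.support, c p * ω p.1 p.2 η) μ = gaussianReal 0 v)
    (hcov : ∀ n m : ℕ, ∀ y z : ℤ × ℤ,
      (∫ η, ω n y η * ω m z η ∂μ) = if n = m then h (y - z) else 0)
    (N : ℕ) (s t : ℕ) (x y : ℤ × ℤ) :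
    (∫ η, Wst (betaN a bh N) (fun n z => ω n z η) s t x *
          Wst (betaN a bh N) (fun n z => ω n z η) s t y ∂μ) =
      Ewalk (2 * t) (x - y) (fun S =>
        Real.exp (betaN a bh N ^ 2 * ∑ n ∈ Finset.Icc (s + 1) t, h (S (2 * n)))) ∧
    Ewalk (2 * t) x (fun S =>
        ∏ n ∈ Finset.Icc (s + 1) t, (1 + betaN a bh N ^ 2 * h (S (2 * n)))) ≤
      (∫ η, Wst (betaN a bh N) (fun n z => ω n z η) s t x *
            Wst (betaN a bh N) (fun n z => ω n z η) s t 0 ∂μ) ∧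
    (∫ η, Wst (betaN a bh N) (fun n z => ω n z η) s t x *
          Wst (betaN a bh N) (fun n z => ω n z η) s t 0 ∂μ) ≤
      Ewalk (2 * t) x (fun S =>
        ∏ n ∈ Finset.Icc (s + 1) t,
          (1 + Real.exp (betaN a bh N ^ 2) * betaN a bh N ^ 2 * h (S (2 * n)))) := by
  have hcovariance := integral_Wst_mul_Wst hgauss hcov hone (betaN a bh N) s t
  have hcovariance_zero := hcovariance x 0
  rw [sub_zero] at hcovariance_zero
  refine ⟨hcovariance x y, ?_, ?_⟩ <;> rw [hcovariance_zero] <;> refine Ewalk_mono fun S => ?_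
  · exact prod_one_add_mul_le_exp_mul_sum (sq_nonneg _) fun n _ => hpos _
  · exact exp_mul_sum_le_prod_one_add (sq_nonneg _) (fun n _ => hpos _)
      fun n _ => covariance_le_one hgauss hcov hone _

/-- Lemma 2.1, covariance formula: `𝔼[W_{s,t}(x) W_{s,t}(y)]` equals the
walk MGF started from `x − y`, together with the sandwich bounds. -/
theorem covariance_formula (a : ℝ) (ha : -1 < a)
    (h : ℤ × ℤ → ℝ) (hpos : ∀ x, 0 ≤ h x) (hbdd : ∃ C : ℝ, ∀ x, h x ≤ C)
    (hone : h 0 = 1)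
    (hasymp : Filter.Tendsto (fun x : ℤ × ℤ => h x * nrm x ^ 2 / Real.log (nrm x) ^ a)
      Filter.cofinite (𝓝 1))
    (hconv : ∃ h₀ : ℤ × ℤ → ℝ, (∀ y, 0 ≤ h₀ y) ∧
      ∀ x, HasSum (fun y => h₀ y * h₀ (x - y)) (h x))
    (bh : ℝ) (hbh0 : 0 ≤ bh)
    {Ω : Type} [MeasurableSpace Ω] (μ : Measure Ω) [IsProbabilityMeasure μ]
    (ω : ℕ → ℤ × ℤ → Ω → ℝ)
    (hmeas : ∀ n x, Measurable (ω n x))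
    (hgauss : ∀ c : (ℕ × (ℤ × ℤ)) →₀ ℝ, ∃ v : ℝ≥0,
      Measure.map (fun η => ∑ p ∈ c.support, c p * ω p.1 p.2 η) μ = gaussianReal 0 v)
    (hcov : ∀ n m : ℕ, ∀ y z : ℤ × ℤ,
      (∫ η, ω n y η * ω m z η ∂μ) = if n = m then h (y - z) else 0)
    (N : ℕ) (hN : 2 ≤ N) (s t : ℕ) (hst : s < t) (htN : t ≤ N) (x y : ℤ × ℤ) :
    (∫ η, Wst (betaN a bh N) (fun n z => ω n z η) s t x *
          Wst (betaN a bh N) (fun n z => ω n z η) s t y ∂μ) =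
      Ewalk (2 * t) (x - y) (fun S =>
        Real.exp (betaN a bh N ^ 2 * ∑ n ∈ Finset.Icc (s + 1) t, h (S (2 * n)))) ∧
    Ewalk (2 * t) x (fun S =>
        ∏ n ∈ Finset.Icc (s + 1) t, (1 + betaN a bh N ^ 2 * h (S (2 * n)))) ≤
      (∫ η, Wst (betaN a bh N) (fun n z => ω n z η) s t x *
            Wst (betaN a bh N) (fun n z => ω n z η) s t 0 ∂μ) ∧
    (∫ η, Wst (betaN a bh N) (fun n z => ω n z η) s t x *
          Wst (betaN a bh N) (fun n z => ω n z η) s t 0 ∂μ) ≤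
      Ewalk (2 * t) x (fun S =>
        ∏ n ∈ Finset.Icc (s + 1) t,
          (1 + Real.exp (betaN a bh N ^ 2) * betaN a bh N ^ 2 * h (S (2 * n)))) :=
  covariance_formula_general a h hpos hone bh μ ω hgauss hcov N s t x y
end
end

section
/- (Generating function of the recursive polynomials via Bessel functions.) Let a > −1. For all z ∈ [0, (a+2) z_a /2) and all x ∈ [0,1], the series Σ_{k=0}^∞ f_k(x) z^{2k} converges and equals J̃_α((2/(a+2)) z x^{(a+2)/2}) / J̃_α((2/(a+2)) z). -/
open MeasureTheory ProbabilityTheory Filter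
open scoped NNReal BigOperators Topology

noncomputable section

/-- The recursive sequence of polynomials `f_0 ≡ 1`,
`f_{k+1}(x) = ∫_0^1 (1 − max(t,x)) tᵃ f_k(t) dt`. -/
def frec (a : ℝ) : ℕ → ℝ → ℝ
  | 0 => fun _ => 1
  | k + 1 => fun x => ∫ t in (0 : ℝ)..1, (1 - max t x) * t ^ a * frec a k t

/-! The generating function `g(x) = J̃_α(2z x^{(a+2)/2}/(a+2))` solves the integral equation
`g = g(1) + z² T g` on `[0,1]`, where `T h(x) = ∫₀¹ (1 - max(t,x)) tᵃ h(t) dt` is the operator with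
`f_{k+1} = T f_k`: term by term, `T` maps `x^{(a+2)n}` to an explicit multiple of
`1 - x^{(a+2)(n+1)}`, and the Bessel recursion makes the coefficients match. Iterating the equation
gives `g(x) = g(1) ∑_{k<K} f_k(x) z^{2k} + z^{2K} Tᴷ g(x)`. Below the first zero `g > 0`, so the
remainder is nonnegative, and positivity of `T` bounds it by `(max g) z^{2K} f_K(x)`, the general
term of a series whose partial sums are at most `g(x)/g(1)`; hence it tends to `0`. -/

open Set Filter intervalIntegral Real

def kernelOp (a : ℝ) (h : ℝ → ℝ) (x : ℝ) : ℝ :=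
  ∫ t in (0 : ℝ)..1, (1 - max t x) * t ^ a * h t

section KernelOp

variable {a : ℝ}

theorem frec_succ (a : ℝ) (k : ℕ) : frec a (k + 1) = kernelOp a (frec a k) := rfl

theorem intervalIntegrable_kernel_mul (ha : -1 < a) (x : ℝ) {h : ℝ → ℝ}
    (hh : ContinuousOn h (Icc 0 1)) :
    IntervalIntegrable (fun t => (1 - max t x) * t ^ a * h t) volume 0 1 :=
  ((intervalIntegrable_rpow' ha).continuousOn_mul (by fun_prop)).mul_continuousOn
    (by rwa [uIcc_of_le zero_le_one])

theorem kernelOp_congr {h₁ h₂ : ℝ → ℝ} (h : EqOn h₁ h₂ (Icc 0 1)) :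
    kernelOp a h₁ = kernelOp a h₂ := by
  funext x
  refine integral_congr fun t ht => ?_
  rw [uIcc_of_le zero_le_one] at ht
  simp only [h ht]

theorem kernelOp_const_mul (c : ℝ) (h : ℝ → ℝ) (x : ℝ) :
    kernelOp a (fun t => c * h t) x = c * kernelOp a h x := by
  simp only [kernelOp, ← intervalIntegral.integral_const_mul]
  congr 1
  ext t
  ring

theorem kernelOp_add (ha : -1 < a) {h₁ h₂ : ℝ → ℝ} (hc₁ : ContinuousOn h₁ (Icc 0 1))
    (hc₂ : ContinuousOn h₂ (Icc 0 1)) (x : ℝ) :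
    kernelOp a (fun t => h₁ t + h₂ t) x = kernelOp a h₁ x + kernelOp a h₂ x := by
  simp only [kernelOp, mul_add]
  exact integral_add (intervalIntegrable_kernel_mul ha x hc₁)
    (intervalIntegrable_kernel_mul ha x hc₂)

theorem kernel_nonneg {t x : ℝ} (ht : t ∈ Icc (0 : ℝ) 1) (hx : x ∈ Icc (0 : ℝ) 1) :
    0 ≤ (1 - max t x) * t ^ a :=
  mul_nonneg (sub_nonneg.2 (max_le ht.2 hx.2)) (rpow_nonneg ht.1 a)

theorem kernelOp_nonneg {h : ℝ → ℝ} (hh : ∀ t ∈ Icc (0 : ℝ) 1, 0 ≤ h t) {x : ℝ}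
    (hx : x ∈ Icc (0 : ℝ) 1) : 0 ≤ kernelOp a h x :=
  integral_nonneg zero_le_one fun t ht => mul_nonneg (kernel_nonneg ht hx) (hh t ht)

theorem kernelOp_mono (ha : -1 < a) {h₁ h₂ : ℝ → ℝ} (hc₁ : ContinuousOn h₁ (Icc 0 1))
    (hc₂ : ContinuousOn h₂ (Icc 0 1)) (hle : ∀ t ∈ Icc (0 : ℝ) 1, h₁ t ≤ h₂ t) {x : ℝ}
    (hx : x ∈ Icc (0 : ℝ) 1) : kernelOp a h₁ x ≤ kernelOp a h₂ x :=
  integral_mono_on zero_le_one (intervalIntegrable_kernel_mul ha x hc₁)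
    (intervalIntegrable_kernel_mul ha x hc₂) fun t ht =>
      mul_le_mul_of_nonneg_left (hle t ht) (kernel_nonneg ht hx)

/-- `T h` is Lipschitz with constant `∫₀¹ tᵃ |h t| dt`, because `x ↦ max t x` is 1-Lipschitz. -/
theorem continuous_kernelOp (ha : -1 < a) {h : ℝ → ℝ} (hh : ContinuousOn h (Icc 0 1)) :
    Continuous (kernelOp a h) := by
  have hI : IntervalIntegrable (fun t => t ^ a * |h t|) volume 0 1 :=
    (intervalIntegrable_rpow' ha).mul_continuousOn (by rw [uIcc_of_le zero_le_one]; exact hh.abs)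
  refine (LipschitzWith.of_dist_le' (K := ∫ t in (0 : ℝ)..1, t ^ a * |h t|)
    fun x y => ?_).continuous
  rw [dist_eq_norm, dist_eq, kernelOp, kernelOp,
    ← integral_sub (intervalIntegrable_kernel_mul ha x hh) (intervalIntegrable_kernel_mul ha y hh),
    ← intervalIntegral.integral_mul_const]
  refine norm_integral_le_of_norm_le zero_le_one (Eventually.of_forall fun t ht => ?_)
    (hI.mul_const _)
  have hmax : |max t y - max t x| ≤ |x - y| := by
    simpa [abs_sub_comm] using abs_max_sub_max_le_max t y t x
  calc ‖(1 - max t x) * t ^ a * h t - (1 - max t y) * t ^ a * h t‖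
      = |max t y - max t x| * (t ^ a * |h t|) := by
        rw [norm_eq_abs, show (1 - max t x) * t ^ a * h t - (1 - max t y) * t ^ a * h t =
          (max t y - max t x) * (t ^ a * h t) by ring, abs_mul, abs_mul,
          abs_of_nonneg (rpow_nonneg ht.1.le a)]
    _ ≤ |x - y| * (t ^ a * |h t|) := by have := rpow_nonneg ht.1.le a; gcongr
    _ = t ^ a * |h t| * |x - y| := mul_comm _ _

end KernelOp

section Iterates

variable {a : ℝ}

theorem continuous_frec (ha : -1 < a) (k : ℕ) : Continuous (frec a k) := by
  induction k with
  | zero => exact continuous_const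
  | succ k ih => exact continuous_kernelOp ha ih.continuousOn

theorem frec_nonneg (k : ℕ) {t : ℝ} (ht : t ∈ Icc (0 : ℝ) 1) : 0 ≤ frec a k t := by
  induction k generalizing t with
  | zero => exact zero_le_one
  | succ k ih => exact kernelOp_nonneg (fun s hs => ih hs) ht

theorem continuousOn_kernelOp_iterate (ha : -1 < a) {g : ℝ → ℝ} (hg : ContinuousOn g (Icc 0 1))
    (K : ℕ) : ContinuousOn ((kernelOp a)^[K] g) (Icc 0 1) := by
  induction K with
  | zero => exact hg
  | succ K ih =>
    rw [Function.iterate_succ']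
    exact (continuous_kernelOp ha ih).continuousOn

theorem kernelOp_iterate_nonneg {g : ℝ → ℝ} (hg : ∀ t ∈ Icc (0 : ℝ) 1, 0 ≤ g t) (K : ℕ) {t : ℝ}
    (ht : t ∈ Icc (0 : ℝ) 1) : 0 ≤ (kernelOp a)^[K] g t := by
  induction K generalizing t with
  | zero => exact hg t ht
  | succ K ih =>
    rw [Function.iterate_succ_apply']
    exact kernelOp_nonneg (fun s hs => ih hs) ht

theorem kernelOp_iterate_le_mul_frec (ha : -1 < a) {g : ℝ → ℝ} (hgc : ContinuousOn g (Icc 0 1))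
    {C : ℝ} (hg : ∀ t ∈ Icc (0 : ℝ) 1, g t ≤ C) (K : ℕ) {t : ℝ} (ht : t ∈ Icc (0 : ℝ) 1) :
    (kernelOp a)^[K] g t ≤ C * frec a K t := by
  induction K generalizing t with
  | zero => simpa [frec] using hg t ht
  | succ K ih =>
    rw [Function.iterate_succ_apply', frec_succ, ← kernelOp_const_mul]
    exact kernelOp_mono ha (continuousOn_kernelOp_iterate ha hgc K)
      (continuous_const.mul (continuous_frec ha K)).continuousOn (fun s hs => ih hs) ht

theorem kernelOp_iterate_eq (ha : -1 < a) {g : ℝ → ℝ} (hgc : ContinuousOn g (Icc 0 1)) {c w : ℝ}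
    (hfix : ∀ y ∈ Icc (0 : ℝ) 1, g y = c + w * kernelOp a g y) (K : ℕ) {y : ℝ}
    (hy : y ∈ Icc (0 : ℝ) 1) :
    (kernelOp a)^[K] g y = c * frec a K y + w * (kernelOp a)^[K + 1] g y := by
  induction K generalizing y with
  | zero => simpa [frec] using hfix y hy
  | succ K ih =>
    have h₁ : ContinuousOn (fun s => c * frec a K s) (Icc 0 1) :=
      continuousOn_const.mul (continuous_frec ha K).continuousOn
    have h₂ : ContinuousOn (fun s => w * (kernelOp a)^[K + 1] g s) (Icc 0 1) :=
      continuousOn_const.mul (continuousOn_kernelOp_iterate ha hgc _)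
    rw [Function.iterate_succ_apply', kernelOp_congr fun s hs => ih hs, kernelOp_add ha h₁ h₂,
      kernelOp_const_mul, kernelOp_const_mul, ← frec_succ,
      ← Function.iterate_succ_apply' (kernelOp a)]

theorem eq_sum_frec_add_iterate (ha : -1 < a) {g : ℝ → ℝ} (hgc : ContinuousOn g (Icc 0 1)) {z : ℝ}
    (hfix : ∀ y ∈ Icc (0 : ℝ) 1, g y = g 1 + z ^ 2 * kernelOp a g y) {x : ℝ}
    (hx : x ∈ Icc (0 : ℝ) 1) (K : ℕ) :
    g x = g 1 * ∑ k ∈ Finset.range K, frec a k x * z ^ (2 * k) +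
      z ^ (2 * K) * (kernelOp a)^[K] g x := by
  induction K with
  | zero => simp
  | succ K ih =>
    rw [ih, kernelOp_iterate_eq ha hgc hfix K hx, Finset.sum_range_succ]
    ring

theorem hasSum_frec_of_eq_add_kernelOp (ha : -1 < a) {g : ℝ → ℝ}
    (hgc : ContinuousOn g (Icc 0 1)) (hpos : ∀ y ∈ Icc (0 : ℝ) 1, 0 < g y) {z : ℝ}
    (hfix : ∀ y ∈ Icc (0 : ℝ) 1, g y = g 1 + z ^ 2 * kernelOp a g y) {x : ℝ}
    (hx : x ∈ Icc (0 : ℝ) 1) :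
    HasSum (fun k => frec a k x * z ^ (2 * k)) (g x / g 1) := by
  have hg1 : 0 < g 1 := hpos 1 (right_mem_Icc.2 zero_le_one)
  obtain ⟨C, hC⟩ := isCompact_Icc.exists_bound_of_continuousOn hgc
  set R : ℕ → ℝ := fun K => z ^ (2 * K) * (kernelOp a)^[K] g x
  have hz : ∀ K, 0 ≤ z ^ (2 * K) := fun K => by rw [pow_mul]; positivity
  have hR_nonneg : ∀ K, 0 ≤ R K := fun K =>
    mul_nonneg (hz K) (kernelOp_iterate_nonneg (fun t ht => (hpos t ht).le) K hx)
  have hR_le : ∀ K, R K ≤ C * (frec a K x * z ^ (2 * K)) := fun K => by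
    have := kernelOp_iterate_le_mul_frec ha hgc (fun t ht => (le_abs_self _).trans (hC t ht)) K hx
    calc R K ≤ z ^ (2 * K) * (C * frec a K x) := mul_le_mul_of_nonneg_left this (hz K)
      _ = C * (frec a K x * z ^ (2 * K)) := by ring
  have hpartial : ∀ K, ∑ k ∈ Finset.range K, frec a k x * z ^ (2 * k) = (g x - R K) / g 1 :=
    fun K => by rw [eq_div_iff hg1.ne', eq_sum_frec_add_iterate ha hgc hfix hx K]; ring
  have hsum : Summable fun k => frec a k x * z ^ (2 * k) :=
    summable_of_sum_range_le (c := g x / g 1) (fun k => mul_nonneg (frec_nonneg k hx) (hz k))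
      fun K => by rw [hpartial]; exact div_le_div_of_nonneg_right (by linarith [hR_nonneg K]) hg1.le
  have hR : Tendsto R atTop (𝓝 0) :=
    squeeze_zero hR_nonneg hR_le (by simpa using hsum.tendsto_atTop_zero.const_mul C)
  rw [hsum.hasSum_iff_tendsto_nat, funext hpartial]
  simpa using (tendsto_const_nhds.sub hR).div_const (g 1)

end Iterates

section PowerSeries

variable {a : ℝ}

theorem integral_kernel_rpow {b : ℝ} (hb : -1 < b) {x : ℝ} (hx : x ∈ Icc (0 : ℝ) 1) :
    ∫ t in (0 : ℝ)..1, (1 - max t x) * t ^ b = (1 - x ^ (b + 2)) / ((b + 1) * (b + 2)) := by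
  obtain ⟨hx0, hx1⟩ := hx
  have hb1 : b + 1 ≠ 0 := by linarith
  have hb2 : b + 2 ≠ 0 := by linarith
  have hint : ∀ u v : ℝ, IntervalIntegrable (fun t => (1 - max t x) * t ^ b) volume u v :=
    fun u v => (intervalIntegrable_rpow' hb).continuousOn_mul (by fun_prop)
  have hleft : ∫ t in (0 : ℝ)..x, (1 - max t x) * t ^ b = (1 - x) * (x ^ (b + 1) / (b + 1)) := by
    rw [integral_congr (g := fun t => (1 - x) * t ^ b) fun t ht => by
      rw [uIcc_of_le hx0] at ht; simp only [max_eq_right ht.2]]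
    rw [intervalIntegral.integral_const_mul, integral_rpow (Or.inl hb), zero_rpow hb1, sub_zero]
  have hright : ∫ t in x..1, (1 - max t x) * t ^ b =
      (1 - x ^ (b + 1)) / (b + 1) - (1 - x ^ (b + 2)) / (b + 2) := by
    rw [integral_congr (g := fun t => t ^ b - t ^ (b + 1)) fun t ht => by
      rw [uIcc_of_le hx1] at ht
      simp only [max_eq_left ht.1, rpow_add_one' (hx0.trans ht.1) hb1]
      ring]
    rw [integral_sub (intervalIntegrable_rpow' hb) (intervalIntegrable_rpow' (by linarith)),
      integral_rpow (Or.inl hb), integral_rpow (Or.inl (by linarith)), one_rpow, one_rpow,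
      add_assoc, one_add_one_eq_two]
  have hx2 : x ^ (b + 2) = x ^ (b + 1) * x := by
    rw [← rpow_add_one' hx0 (by linarith)]; ring_nf
  rw [← integral_add_adjacent_intervals (hint 0 x) (hint x 1), hleft, hright, hx2]
  field_simp
  ring

theorem abs_kernel_mul_rpow_add_le {t x p : ℝ} (ht : t ∈ Ioc (0 : ℝ) 1)
    (hx : x ∈ Icc (0 : ℝ) 1) (hp : 0 ≤ p) : |(1 - max t x) * t ^ (a + p)| ≤ t ^ a := by
  have hk₀ : 0 ≤ 1 - max t x := sub_nonneg.2 (max_le ht.2 hx.2)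
  have hk₁ : 1 - max t x ≤ 1 := by linarith [le_max_left t x, ht.1]
  have hta := rpow_nonneg ht.1.le a
  have htp := rpow_nonneg ht.1.le p
  rw [rpow_add ht.1, abs_of_nonneg (by positivity)]
  calc (1 - max t x) * (t ^ a * t ^ p) = t ^ a * ((1 - max t x) * t ^ p) := by ring
    _ ≤ t ^ a * 1 := by gcongr; exact mul_le_one₀ hk₁ htp (rpow_le_one ht.1.le ht.2 hp)
    _ = t ^ a := mul_one _

theorem hasSum_kernelOp_of_hasSum (ha : -1 < a) {e : ℕ → ℝ} (he : Summable e) {G : ℝ → ℝ}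
    (hG : ∀ t ∈ Icc (0 : ℝ) 1, HasSum (fun n : ℕ => e n * t ^ ((a + 2) * n)) (G t)) {x : ℝ}
    (hx : x ∈ Icc (0 : ℝ) 1) :
    HasSum (fun n : ℕ => e n * ((1 - x ^ ((a + 2) * (n + 1))) /
      (((a + 2) * (n + 1) - 1) * ((a + 2) * (n + 1))))) (kernelOp a G x) := by
  have hp : ∀ n : ℕ, 0 ≤ (a + 2) * n := fun n => mul_nonneg (by linarith) n.cast_nonneg
  have hb : ∀ n : ℕ, -1 < a + (a + 2) * n := fun n => by linarith [hp n]
  have hF : ∀ n : ℕ, IntervalIntegrable (fun t => e n * ((1 - max t x) * t ^ (a + (a + 2) * n)))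
      volume 0 1 := fun n =>
    ((intervalIntegrable_rpow' (hb n)).continuousOn_mul (by fun_prop)).const_mul (e n)
  have key := hasSum_integral_of_dominated_convergence (μ := volume)
    (f := fun t => (1 - max t x) * t ^ a * G t) (fun n t => |e n| * t ^ a)
    (fun n => (hF n).def'.aestronglyMeasurable)
    (fun n => Eventually.of_forall fun t ht => by
      rw [uIoc_of_le zero_le_one] at ht
      rw [norm_mul, norm_eq_abs, norm_eq_abs]
      exact mul_le_mul_of_nonneg_left (abs_kernel_mul_rpow_add_le ht hx (hp n)) (abs_nonneg _))
    (Eventually.of_forall fun t _ => he.abs.mul_right _)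
    (by simpa only [tsum_mul_right] using (intervalIntegrable_rpow' ha).const_mul _)
    (Eventually.of_forall fun t ht => by
      rw [uIoc_of_le zero_le_one] at ht
      exact ((hG t ⟨ht.1.le, ht.2⟩).mul_left ((1 - max t x) * t ^ a)).congr_fun fun n => by
        rw [rpow_add ht.1]; ring)
  refine key.congr_fun fun n => ?_
  rw [intervalIntegral.integral_const_mul, integral_kernel_rpow (hb n) hx,
    show a + (a + 2) * n + 2 = (a + 2) * (n + 1) by ring,
    show a + (a + 2) * n + 1 = (a + 2) * (n + 1) - 1 by ring]

theorem sq_mul_kernelOp_eq_sub (ha : -1 < a) {e : ℕ → ℝ} (he : Summable e) {G : ℝ → ℝ}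
    (hG : ∀ t ∈ Icc (0 : ℝ) 1, HasSum (fun n : ℕ => e n * t ^ ((a + 2) * n)) (G t)) {z : ℝ}
    (hrec : ∀ n : ℕ, z ^ 2 * e n = -e (n + 1) * (((a + 2) * (n + 1) - 1) * ((a + 2) * (n + 1))))
    {x : ℝ} (hx : x ∈ Icc (0 : ℝ) 1) :
    z ^ 2 * kernelOp a G x = G x - G 1 := by
  have hq : ∀ n : ℕ, ((a + 2) * (n + 1) - 1) * ((a + 2) * (n + 1)) ≠ 0 := fun n => by
    have : 1 ≤ (n : ℝ) + 1 := by linarith [n.cast_nonneg (α := ℝ)]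
    have : 1 < (a + 2) * (n + 1) := by nlinarith
    positivity
  have hT : HasSum (fun n : ℕ => -(e (n + 1) * (1 - x ^ ((a + 2) * (n + 1 : ℕ)))))
      (z ^ 2 * kernelOp a G x) :=
    ((hasSum_kernelOp_of_hasSum ha he hG hx).mul_left (z ^ 2)).congr_fun fun n => by
      rw [← mul_assoc, hrec n, mul_assoc, mul_div_cancel₀ _ (hq n)]
      push_cast
      ring
  have hdiff : HasSum (fun n : ℕ => e n * (1 - x ^ ((a + 2) * n))) (G 1 - G x) :=
    ((hG 1 (right_mem_Icc.2 zero_le_one)).sub (hG x hx)).congr_fun fun n => by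
      rw [one_rpow]; ring
  have hshift := (hasSum_nat_add_iff' 1).2 hdiff
  simp only [Finset.range_one, Finset.sum_singleton, CharP.cast_eq_zero, mul_zero, rpow_zero,
    sub_self, sub_zero] at hshift
  rw [hT.unique hshift.neg]
  ring

end PowerSeries

theorem Real.Gamma_mul_pow_le_Gamma_add_nat {s : ℝ} (hs : 0 < s) (n : ℕ) :
    Gamma s * s ^ n ≤ Gamma (s + n) := by
  induction n with
  | zero => simp
  | succ n ih =>
    have hsn : 0 < s + n := by positivity
    rw [Nat.cast_succ, ← add_assoc, Gamma_add_one hsn.ne', pow_succ]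
    calc Gamma s * (s ^ n * s) = s * (Gamma s * s ^ n) := by ring
      _ ≤ (s + n) * Gamma (s + n) :=
        mul_le_mul (by linarith) ih (by have := Gamma_pos_of_pos hs; positivity) hsn.le

section Bessel

variable {a : ℝ}

def besselCoeff (a : ℝ) (n : ℕ) : ℝ :=
  (-1) ^ n / (Gamma ((n : ℝ) + alphaOf a + 1) * (n.factorial : ℝ))

theorem alphaOf_add_one_pos (ha : -1 < a) : 0 < alphaOf a + 1 := by
  rw [alphaOf, sub_add_cancel]
  exact div_pos (by linarith) (by linarith)

theorem norm_besselCoeff_mul_pow_le (ha : -1 < a) (r : ℝ) (n : ℕ) :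
    ‖besselCoeff a n * r ^ n‖ ≤
      (Gamma (alphaOf a + 1))⁻¹ * ((|r| / (alphaOf a + 1)) ^ n / n.factorial) := by
  set s := alphaOf a + 1
  have hs : 0 < s := alphaOf_add_one_pos ha
  have hΓs := Gamma_pos_of_pos hs
  have hΓn : 0 < Gamma (s + n) := Gamma_pos_of_pos (add_pos_of_pos_of_nonneg hs n.cast_nonneg)
  have hnorm : ‖besselCoeff a n * r ^ n‖ = |r| ^ n / (Gamma (s + n) * n.factorial) := by
    rw [besselCoeff, show (n : ℝ) + alphaOf a + 1 = s + n by ring]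
    simp only [norm_mul, norm_div, norm_pow, norm_neg, norm_one, one_pow, norm_eq_abs,
      abs_of_pos hΓn, Nat.abs_cast]
    ring
  rw [hnorm, show (Gamma s)⁻¹ * ((|r| / s) ^ n / n.factorial) =
    |r| ^ n / (Gamma s * s ^ n * n.factorial) by rw [div_pow]; field_simp]
  gcongr
  exact Gamma_mul_pow_le_Gamma_add_nat hs n

theorem summable_besselCoeff_mul_pow (ha : -1 < a) (r : ℝ) :
    Summable fun n => besselCoeff a n * r ^ n :=
  .of_norm_bounded ((summable_pow_div_factorial _).mul_left _) (norm_besselCoeff_mul_pow_le ha r)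

theorem besselCoeff_succ (ha : -1 < a) (n : ℕ) :
    besselCoeff a (n + 1) * ((n + alphaOf a + 1) * (n + 1)) = -besselCoeff a n := by
  have hsn : 0 < (n : ℝ) + alphaOf a + 1 := by
    linarith [alphaOf_add_one_pos ha, n.cast_nonneg (α := ℝ)]
  rw [besselCoeff, besselCoeff, Nat.factorial_succ, Nat.cast_mul, Nat.cast_succ,
    show (n : ℝ) + 1 + alphaOf a + 1 = (n + alphaOf a + 1) + 1 by ring,
    Gamma_add_one hsn.ne', pow_succ]
  have := Gamma_pos_of_pos hsn
  field_simp

theorem Jt_eq_tsum (a y : ℝ) :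
    Jt a y = Gamma (alphaOf a + 1) * ∑' n, besselCoeff a n * ((y / 2) ^ 2) ^ n := by
  simp only [Jt, besselCoeff, pow_mul]

theorem Jt_zero (ha : -1 < a) : Jt a 0 = 1 := by
  rw [Jt_eq_tsum, tsum_eq_single 0 fun n hn => by simp [hn]]
  simp [besselCoeff, (Gamma_pos_of_pos (alphaOf_add_one_pos ha)).ne']

theorem continuous_tsum_besselCoeff_mul_pow (ha : -1 < a) :
    Continuous fun w => ∑' n, besselCoeff a n * w ^ n := by
  refine continuous_iff_continuousAt.2 fun w => ?_
  set R := |w| + 1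
  have hw : Icc (-R) R ∈ 𝓝 w :=
    Icc_mem_nhds (by linarith [neg_abs_le w]) (by linarith [le_abs_self w])
  refine (continuousOn_tsum (fun n => by fun_prop) (summable_besselCoeff_mul_pow ha R).norm
    fun n v hv => ?_).continuousAt hw
  rw [norm_mul, norm_mul, norm_pow, norm_pow, norm_eq_abs v, norm_of_nonneg (by positivity : 0 ≤ R)]
  gcongr
  exact abs_le.2 hv

theorem continuous_Jt (ha : -1 < a) : Continuous (Jt a) := by
  simp only [funext (Jt_eq_tsum a)]
  exact continuous_const.mul ((continuous_tsum_besselCoeff_mul_pow ha).comp (by fun_prop))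

theorem Jt_pos_of_lt_za (ha : -1 < a) {v : ℝ} (hv₀ : 0 ≤ v) (hv : v < za a) : 0 < Jt a v := by
  have hJ0 : Jt a 0 = 1 := Jt_zero ha
  by_contra! hle
  obtain ⟨c, hc, hJc⟩ : ∃ c ∈ Icc 0 v, Jt a c = 0 :=
    intermediate_value_Icc' hv₀ (continuous_Jt ha).continuousOn ⟨hle, hJ0 ▸ zero_le_one⟩
  have hc₀ : 0 < c := hc.1.lt_of_ne (by rintro rfl; simp [hJ0] at hJc)
  exact (csInf_le (s := {z | 0 < z ∧ Jt a z = 0}) ⟨0, fun y hy => hy.1.le⟩ ⟨hc₀, hJc⟩).not_gt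
    (hc.2.trans_lt hv)

end Bessel

section GeneratingFunction

variable {a : ℝ}

theorem hasSum_Jt_mul_rpow (ha : -1 < a) (z : ℝ) {x : ℝ} (hx : 0 ≤ x) :
    HasSum (fun n : ℕ => Gamma (alphaOf a + 1) * (besselCoeff a n * ((z / (a + 2)) ^ 2) ^ n) *
      x ^ ((a + 2) * n)) (Jt a (2 / (a + 2) * z * x ^ ((a + 2) / 2))) := by
  rw [Jt_eq_tsum]
  refine ((summable_besselCoeff_mul_pow ha _).hasSum.mul_left _).congr_fun fun n => ?_
  have hx2 : (x ^ ((a + 2) / 2)) ^ 2 = x ^ (a + 2) := by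
    rw [← rpow_mul_natCast hx]; norm_num
  have hsq : (2 / (a + 2) * z * x ^ ((a + 2) / 2) / 2) ^ 2 = (z / (a + 2)) ^ 2 * x ^ (a + 2) := by
    rw [← hx2]; ring
  rw [hsq, rpow_mul_natCast hx, mul_pow]
  ring

theorem sq_mul_besselCoeff_recursion (ha : -1 < a) (z : ℝ) (n : ℕ) :
    z ^ 2 * (Gamma (alphaOf a + 1) * (besselCoeff a n * ((z / (a + 2)) ^ 2) ^ n)) =
      -(Gamma (alphaOf a + 1) * (besselCoeff a (n + 1) * ((z / (a + 2)) ^ 2) ^ (n + 1))) *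
        (((a + 2) * (n + 1) - 1) * ((a + 2) * (n + 1))) := by
  have ha2 : a + 2 ≠ 0 := by linarith
  have hw : (z / (a + 2)) ^ 2 * (a + 2) ^ 2 = z ^ 2 := by field_simp
  -- the one place where the value `α = (a+1)/(a+2) - 1` matters
  have hα : (a + 2) * (n + 1) - 1 = (a + 2) * (n + alphaOf a + 1) := by
    rw [alphaOf]; field_simp; ring
  rw [hα]
  linear_combination (Gamma (alphaOf a + 1) * ((z / (a + 2)) ^ 2) ^ (n + 1) * (a + 2) ^ 2) *
    besselCoeff_succ ha n - (Gamma (alphaOf a + 1) * besselCoeff a n * ((z / (a + 2)) ^ 2) ^ n) * hw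

theorem Jt_rpow_eq_add_sq_mul_kernelOp (ha : -1 < a) (z : ℝ) {y : ℝ} (hy : y ∈ Icc (0 : ℝ) 1) :
    Jt a (2 / (a + 2) * z * y ^ ((a + 2) / 2)) = Jt a (2 / (a + 2) * z) +
      z ^ 2 * kernelOp a (fun t => Jt a (2 / (a + 2) * z * t ^ ((a + 2) / 2))) y := by
  rw [sq_mul_kernelOp_eq_sub ha ((summable_besselCoeff_mul_pow ha _).mul_left _)
    (fun t ht => hasSum_Jt_mul_rpow ha z ht.1) (sq_mul_besselCoeff_recursion ha z) hy,
    one_rpow, mul_one]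
  ring

end GeneratingFunction

/-- Theorem 6.1, generating function of the recursive polynomials. -/
theorem recursive_polynomials_generating_function (a : ℝ) (ha : -1 < a) :
    ∀ z : ℝ, 0 ≤ z → z < (a + 2) * za a / 2 → ∀ x ∈ Set.Icc (0 : ℝ) 1,
      HasSum (fun k : ℕ => frec a k x * z ^ (2 * k))
        (Jt a (2 / (a + 2) * z * x ^ ((a + 2) / 2)) / Jt a (2 / (a + 2) * z)) := by
  intro z hz hza x hx
  set g : ℝ → ℝ := fun y => Jt a (2 / (a + 2) * z * y ^ ((a + 2) / 2))
  have hg1 : Jt a (2 / (a + 2) * z) = g 1 := by simp [g]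
  have hgc : ContinuousOn g (Icc 0 1) :=
    (continuous_Jt ha).comp_continuousOn (continuousOn_const.mul
      (continuousOn_id.rpow_const fun _ _ => Or.inr (by linarith)))
  have hgpos : ∀ y ∈ Icc (0 : ℝ) 1, 0 < g y := fun y hy => by
    have hc : 0 ≤ 2 / (a + 2) * z := mul_nonneg (div_nonneg zero_le_two (by linarith)) hz
    refine Jt_pos_of_lt_za ha (mul_nonneg hc (rpow_nonneg hy.1 _)) ?_
    calc 2 / (a + 2) * z * y ^ ((a + 2) / 2) ≤ 2 / (a + 2) * z :=
          mul_le_of_le_one_right hc (rpow_le_one hy.1 hy.2 (by linarith))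
      _ < za a := by rw [div_mul_eq_mul_div, div_lt_iff₀ (by linarith)]; linarith
  have hfix : ∀ y ∈ Icc (0 : ℝ) 1, g y = g 1 + z ^ 2 * kernelOp a g y := fun y hy => by
    rw [← hg1]; exact Jt_rpow_eq_add_sq_mul_kernelOp ha z hy
  rw [hg1]
  exact hasSum_frec_of_eq_add_kernelOp ha hgc hgpos hfix hx
end
end
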